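/- Let k be an algebraically closed field of characteristic p and q = p^e. Let Q_1, ..., Q_n ∈ k[X] all have degree λ with leading coefficients q_1, ..., q_n satisfying Δ_n(q_1,...,q_n) ≠ 0. Let P = Δ_n(Q_1,...,Q_n) and for each nonzero ε ∈ F_p^n let P_ε = Σ_i ε_i (-1)^{i-1} Δ_{n-1}(Q-hat_i), where Q-hat_i omits Q_i. Then: (1) deg P = (1 + p + ... + p^{n-1})λ; (2) deg P_ε = (1 + p + ... + p^{n-2})λ; and (3) P_ε divides P in k[X]. -/

import Mathlib

/-!
Every entry of the `i`-th row of `Δ(Q)` has degree at most `p^i λ`, so `Δ(Q)` has degree at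
most `(1 + p + ⋯ + p^{n-1}) λ`, and its coefficient there is `Δ(q) ≠ 0`.

`P_ε` is the Laplace expansion of the Moore matrix of `Q` with its last row removed and the row
`ε` put on top. Since Frobenius commutes with `𝔽_p`-linear combinations, a column operation
`A ∈ SL_n(𝔽_p)` with `ε A = ε_j e_j` turns this matrix into the same shape for `Q' = Q A`, whose
first row is now `ε_j e_j`; hence `P_ε = ± ε_j Δ_{n-1}(Q'-hat_j)`, while `Δ(Q') = Δ(Q)`.

The degree count above, applied to `Q'-hat_j`, gives the degree of `P_ε` once the leading
coefficients of `Q'-hat_j` have nonzero Moore determinant. This, and `Δ(Q'-hat_j) ∣ Δ(Q')`, come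
from the classical factorisation `Δ(y, R) = (-1)^m Δ(R) ∏_{c ∈ 𝔽_p^m} (y - Σ cᵢ Rᵢ)`: as a
polynomial in `y` the left side has degree `p^m`, leading coefficient `(-1)^m Δ(R)`, and vanishes
at the `p^m` combinations `Σ cᵢ Rᵢ`, which are distinct when `Δ(R) ≠ 0`. By induction it shows
that `Δ(R) ≠ 0` exactly when `R` is `𝔽_p`-linearly independent, so `Δ` does not vanish on
subfamilies.
-/

open Polynomial

def mooreMatrix {k : Type*} [CommRing k] (p : ℕ) {n : ℕ} (a : Fin n → k) :
    Matrix (Fin n) (Fin n) k :=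
  Matrix.of fun i j => a j ^ p ^ (i : ℕ)

open Matrix

namespace Polynomial

variable {R : Type*} [CommRing R]

theorem coeff_prod_sum_of_natDegree_le {ι : Type*} (s : Finset ι) (f : ι → R[X]) (d : ι → ℕ)
    (h : ∀ i ∈ s, (f i).natDegree ≤ d i) :
    (∏ i ∈ s, f i).coeff (∑ i ∈ s, d i) = ∏ i ∈ s, (f i).coeff (d i) := by
  classical
  induction s using Finset.induction_on with
  | empty => simp
  | insert a s ha ih =>
    rw [Finset.forall_mem_insert] at h
    have hprod : (∏ i ∈ s, f i).natDegree ≤ ∑ i ∈ s, d i :=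
      le_trans (natDegree_prod_le _ _) (Finset.sum_le_sum h.2)
    rw [Finset.prod_insert ha, Finset.sum_insert ha, Finset.prod_insert ha,
      coeff_mul_add_eq_of_natDegree_le h.1 hprod, ih h.2]

theorem prod_X_sub_C_dvd_of_isRoot [IsDomain R] {ι : Type*} [Fintype ι] {v : ι → R}
    (hv : Function.Injective v) {g : R[X]} (hg : g ≠ 0) (hroot : ∀ i, g.IsRoot (v i)) :
    ∏ i, (X - C (v i)) ∣ g := by
  have hprod : ∏ i, (X - C (v i)) = ((Finset.univ.val.map v).map fun a => X - C a).prod := by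
    rw [Multiset.map_map]
    rfl
  rw [hprod, Multiset.prod_X_sub_C_dvd_iff_le_roots hg,
    Multiset.le_iff_subset (Finset.univ.nodup.map hv)]
  intro a ha
  obtain ⟨i, -, rfl⟩ := Multiset.mem_map.1 ha
  exact (mem_roots hg).2 (hroot i)

variable {ι κ : Type*} [Fintype ι]

theorem natDegree_vecMul_map_C_le {Q : ι → R[X]} {l : ℕ} (hQ : ∀ i, (Q i).natDegree ≤ l)
    (B : Matrix ι κ R) (j : κ) : ((Q ᵥ* B.map C) j).natDegree ≤ l :=
  natDegree_sum_le_of_forall_le _ _ fun i _ => (natDegree_mul_C_le _ _).trans (hQ i)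

theorem coeff_vecMul_map_C (Q : ι → R[X]) (B : Matrix ι κ R) (l : ℕ) (j : κ) :
    ((Q ᵥ* B.map C) j).coeff l = ((fun i => (Q i).coeff l) ᵥ* B) j := by
  simp only [vecMul, dotProduct, finsetSum_coeff, map_apply, coeff_mul_C]

end Polynomial

namespace Matrix

variable {n : Type*} [Fintype n] [DecidableEq n]

theorem natDegree_det_le_of_natDegree_le {R : Type*} [CommRing R] (M : Matrix n n R[X])
    (d : n → ℕ) (h : ∀ i j, (M i j).natDegree ≤ d i) : M.det.natDegree ≤ ∑ i, d i := by
  rw [det_apply]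
  refine natDegree_sum_le_of_forall_le _ _ fun σ _ => ?_
  refine (natDegree_smul_le _ _).trans (le_trans (natDegree_prod_le _ _) ?_)
  rw [← Equiv.sum_comp σ d]
  exact Finset.sum_le_sum fun i _ => h _ _

theorem coeff_det_of_natDegree_le {R : Type*} [CommRing R] (M : Matrix n n R[X]) (d : n → ℕ)
    (h : ∀ i j, (M i j).natDegree ≤ d i) :
    M.det.coeff (∑ i, d i) = (of fun i j => (M i j).coeff (d i)).det := by
  rw [det_apply, det_apply, finsetSum_coeff]
  refine Finset.sum_congr rfl fun σ _ => ?_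
  rw [coeff_smul, ← Equiv.sum_comp σ d, coeff_prod_sum_of_natDegree_le _ _ _ fun i _ => h _ _]
  rfl

theorem exists_det_eq_one_vecMul_eq_single {F : Type*} [Field F] (v : n → F) (j : n)
    (hj : v j ≠ 0) : ∃ A : Matrix n n F, A.det = 1 ∧ v ᵥ* A = Pi.single j (v j) := by
  -- `w j = 0` gives `det A = 1`, and `v ᵥ* A = v - v j • w = v j • Pi.single j 1`.
  set w := (v j)⁻¹ • v - Pi.single j 1
  refine ⟨1 + vecMulVec (-Pi.single j 1) w, ?_, ?_⟩
  · rw [vecMulVec_eq Unit, det_one_add_replicateCol_mul_replicateRow]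
    simp [w, hj]
  · rw [vecMul_add, vecMul_one, vecMul_vecMulVec, dotProduct_neg, dotProduct_single, mul_one,
      neg_smul, smul_sub, smul_smul, mul_inv_cancel₀ hj, one_smul, ← Pi.single_smul,
      smul_eq_mul, mul_one]
    abel

end Matrix

section Moore

variable {R : Type*} [CommRing R] {p m : ℕ}

theorem map_det_mooreMatrix {S : Type*} [CommRing S] (f : R →+* S) (a : Fin m → R) :
    f (mooreMatrix p a).det = (mooreMatrix p (f ∘ a)).det := by
  rw [RingHom.map_det]
  congr 1
  ext i j
  simp [mooreMatrix]

theorem natDegree_det_mooreMatrix_le {Q : Fin m → R[X]} {l : ℕ}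
    (hQ : ∀ j, (Q j).natDegree ≤ l) :
    (mooreMatrix p Q).det.natDegree ≤ (∑ i ∈ Finset.range m, p ^ i) * l := by
  rw [← Fin.sum_univ_eq_sum_range, Finset.sum_mul]
  exact natDegree_det_le_of_natDegree_le _ _ fun i j => natDegree_pow_le_of_le _ (hQ j)

theorem coeff_det_mooreMatrix {Q : Fin m → R[X]} {l : ℕ} (hQ : ∀ j, (Q j).natDegree ≤ l) :
    (mooreMatrix p Q).det.coeff ((∑ i ∈ Finset.range m, p ^ i) * l)
      = (mooreMatrix p fun j => (Q j).coeff l).det := by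
  rw [← Fin.sum_univ_eq_sum_range, Finset.sum_mul, coeff_det_of_natDegree_le (mooreMatrix p Q)
    (fun i => p ^ (i : ℕ) * l) fun i j => natDegree_pow_le_of_le _ (hQ j)]
  congr 1
  ext i j
  exact coeff_pow_of_natDegree_le (hQ j)

theorem natDegree_det_mooreMatrix {Q : Fin m → R[X]} {l : ℕ} (hQ : ∀ j, (Q j).natDegree ≤ l)
    (hlead : (mooreMatrix p fun j => (Q j).coeff l).det ≠ 0) :
    (mooreMatrix p Q).det.natDegree = (∑ i ∈ Finset.range m, p ^ i) * l :=
  (natDegree_det_mooreMatrix_le hQ).antisymm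
    (le_natDegree_of_ne_zero (by rwa [coeff_det_mooreMatrix hQ]))

theorem det_mooreMatrix_cons_X_eq_sum (a : Fin m → R) :
    (mooreMatrix p (Fin.cons X (C ∘ a) : Fin (m + 1) → R[X])).det
      = ∑ i : Fin (m + 1), C ((-1) ^ (i : ℕ) *
          (of fun r s => a s ^ p ^ (i.succAbove r : ℕ)).det) * X ^ p ^ (i : ℕ) := by
  rw [det_succ_column_zero]
  refine Finset.sum_congr rfl fun i _ => ?_
  have hminor : (mooreMatrix p (Fin.cons X (C ∘ a) : Fin (m + 1) → R[X])).submatrix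
      i.succAbove Fin.succ = (of fun r s => a s ^ p ^ (i.succAbove r : ℕ)).map C := by
    ext r s
    simp [mooreMatrix]
  rw [hminor, ← RingHom.mapMatrix_apply, ← RingHom.map_det]
  simp only [mooreMatrix, of_apply, Fin.cons_zero, C_mul, C_pow, C_neg, C_1]
  ring

theorem natDegree_det_mooreMatrix_cons_X_le (hp : 0 < p) (a : Fin m → R) :
    (mooreMatrix p (Fin.cons X (C ∘ a) : Fin (m + 1) → R[X])).det.natDegree ≤ p ^ m := by
  rw [det_mooreMatrix_cons_X_eq_sum]
  refine natDegree_sum_le_of_forall_le _ _ fun i _ => (natDegree_C_mul_X_pow_le _ _).trans ?_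
  exact Nat.pow_le_pow_right hp (Nat.lt_succ_iff.1 i.isLt)

theorem coeff_det_mooreMatrix_cons_X (hp : 1 < p) (a : Fin m → R) :
    (mooreMatrix p (Fin.cons X (C ∘ a) : Fin (m + 1) → R[X])).det.coeff (p ^ m)
      = (-1) ^ m * (mooreMatrix p a).det := by
  rw [det_mooreMatrix_cons_X_eq_sum, finsetSum_coeff, Finset.sum_eq_single (Fin.last m)]
  · rw [coeff_C_mul_X_pow, if_pos (by rw [Fin.val_last]), Fin.val_last]
    simp [Fin.succAbove_last, mooreMatrix]
  · intro i _ hi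
    rw [coeff_C_mul_X_pow, if_neg]
    intro h
    exact hi (Fin.ext (Nat.pow_right_injective hp h).symm)
  · simp

theorem eval_det_mooreMatrix_cons_X (a : Fin m → R) (z : R) :
    (mooreMatrix p (Fin.cons X (C ∘ a) : Fin (m + 1) → R[X])).det.eval z
      = (mooreMatrix p (Fin.cons z a : Fin (m + 1) → R)).det := by
  rw [← coe_evalRingHom, map_det_mooreMatrix, Fin.comp_cons]
  simp [Function.comp_def]

theorem det_mooreMatrix_eq_sum_cons (v a : Fin (m + 1) → R) :
    (of (Fin.cons v fun i => mooreMatrix p a i.castSucc)).det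
      = ∑ j : Fin (m + 1),
          (-1) ^ (j : ℕ) * v j * (mooreMatrix p fun r => a (j.succAbove r)).det := by
  rw [det_succ_row_zero]
  rfl

end Moore

section CharP

variable {p : ℕ} [Fact p.Prime] {R : Type*} [CommRing R] [CharP R p] {m : ℕ}

theorem dotProduct_castHom_pow_char_pow (a : Fin m → R) (c : Fin m → ZMod p) (i : ℕ) :
    (a ⬝ᵥ (ZMod.castHom (dvd_refl p) R ∘ c)) ^ p ^ i
      = (fun j => a j ^ p ^ i) ⬝ᵥ (ZMod.castHom (dvd_refl p) R ∘ c) := by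
  simp only [dotProduct, sum_pow_char_pow, mul_pow, Function.comp_apply, ← map_pow,
    ZMod.pow_card_pow]

theorem mooreMatrix_vecMul_map_castHom (a : Fin m → R) (A : Matrix (Fin m) (Fin m) (ZMod p)) :
    mooreMatrix p (a ᵥ* A.map (ZMod.castHom (dvd_refl p) R))
      = mooreMatrix p a * A.map (ZMod.castHom (dvd_refl p) R) := by
  ext i j
  exact dotProduct_castHom_pow_char_pow a (fun x => A x j) i

theorem det_mooreMatrix_vecMul_map_castHom (a : Fin m → R)
    (A : Matrix (Fin m) (Fin m) (ZMod p)) :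
    (mooreMatrix p (a ᵥ* A.map (ZMod.castHom (dvd_refl p) R))).det
      = (mooreMatrix p a).det * ZMod.castHom (dvd_refl p) R A.det := by
  rw [mooreMatrix_vecMul_map_castHom, det_mul, RingHom.map_det, RingHom.mapMatrix_apply]

theorem mooreMatrix_mulVec_castHom (a : Fin m → R) (c : Fin m → ZMod p) :
    mooreMatrix p a *ᵥ (ZMod.castHom (dvd_refl p) R ∘ c)
      = fun i : Fin m => (a ⬝ᵥ (ZMod.castHom (dvd_refl p) R ∘ c)) ^ p ^ (i : ℕ) := by
  ext i
  exact (dotProduct_castHom_pow_char_pow a c i).symm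

theorem cons_mooreMatrix_castSucc_mul_map_castHom (v a : Fin (m + 1) → R)
    (A : Matrix (Fin (m + 1)) (Fin (m + 1)) (ZMod p)) :
    of (Fin.cons v fun i => mooreMatrix p a i.castSucc) * A.map (ZMod.castHom (dvd_refl p) R)
      = of (Fin.cons (v ᵥ* A.map (ZMod.castHom (dvd_refl p) R))
          fun i => mooreMatrix p (a ᵥ* A.map (ZMod.castHom (dvd_refl p) R)) i.castSucc) := by
  rw [mooreMatrix_vecMul_map_castHom]
  exact cons_mul _ _ _

theorem sum_castHom_mul_det_mooreMatrix_succAbove {ε : Fin (m + 1) → ZMod p}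
    {A : Matrix (Fin (m + 1)) (Fin (m + 1)) (ZMod p)} (hA : A.det = 1) {j : Fin (m + 1)}
    (hεA : ε ᵥ* A = Pi.single j (ε j)) (a : Fin (m + 1) → R) :
    ∑ i : Fin (m + 1), (-1) ^ (i : ℕ) * ZMod.castHom (dvd_refl p) R (ε i) *
        (mooreMatrix p fun r => a (i.succAbove r)).det
      = (-1) ^ (j : ℕ) * ZMod.castHom (dvd_refl p) R (ε j) *
          (mooreMatrix p fun r =>
            (a ᵥ* A.map (ZMod.castHom (dvd_refl p) R)) (j.succAbove r)).det := by
  set χ := ZMod.castHom (dvd_refl p) R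
  have hrow : (χ ∘ ε) ᵥ* A.map χ = Pi.single j (χ (ε j)) := by
    ext i
    rw [← RingHom.map_vecMul, hεA]
    rcases eq_or_ne i j with rfl | h <;> simp [*]
  calc _ = (of (Fin.cons (χ ∘ ε) fun i => mooreMatrix p a i.castSucc)).det :=
        (det_mooreMatrix_eq_sum_cons _ _).symm
    _ = (of (Fin.cons (χ ∘ ε) fun i => mooreMatrix p a i.castSucc) * A.map χ).det := by
        rw [det_mul, ← RingHom.mapMatrix_apply, ← RingHom.map_det, hA, map_one, mul_one]
    _ = _ := by
        rw [cons_mooreMatrix_castSucc_mul_map_castHom, hrow, det_mooreMatrix_eq_sum_cons,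
          Finset.sum_eq_single j (fun i _ hi => by simp [hi]) (by simp), Pi.single_eq_same]

variable [IsDomain R]

theorem det_mooreMatrix_eq_zero_of_dotProduct_eq_zero {a : Fin m → R} {c : Fin m → ZMod p}
    (hc : c ≠ 0) (h : a ⬝ᵥ (ZMod.castHom (dvd_refl p) R ∘ c) = 0) :
    (mooreMatrix p a).det = 0 := by
  rw [← exists_mulVec_eq_zero_iff]
  refine ⟨ZMod.castHom (dvd_refl p) R ∘ c, ?_, ?_⟩
  · exact fun h0 => hc (funext fun j =>
      (ZMod.castHom (dvd_refl p) R).injective (by simpa using congrFun h0 j))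
  · rw [mooreMatrix_mulVec_castHom, h]
    ext i
    exact zero_pow (pow_ne_zero _ (Fact.out : p.Prime).ne_zero)

theorem det_mooreMatrix_cons_dotProduct (a : Fin m → R) (c : Fin m → ZMod p) :
    (mooreMatrix p
      (Fin.cons (a ⬝ᵥ (ZMod.castHom (dvd_refl p) R ∘ c)) a : Fin (m + 1) → R)).det = 0 := by
  refine det_mooreMatrix_eq_zero_of_dotProduct_eq_zero (c := Fin.cons (-1) c)
    (fun h => by simpa using congrFun h 0) ?_
  simp [dotProduct, Fin.sum_univ_succ]

theorem dotProduct_castHom_injective {a : Fin m → R} (ha : (mooreMatrix p a).det ≠ 0) :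
    Function.Injective fun c : Fin m → ZMod p => a ⬝ᵥ (ZMod.castHom (dvd_refl p) R ∘ c) := by
  intro c c' h
  by_contra hne
  refine ha (det_mooreMatrix_eq_zero_of_dotProduct_eq_zero (sub_ne_zero.2 hne) ?_)
  have hsub : ZMod.castHom (dvd_refl p) R ∘ (c - c')
      = ZMod.castHom (dvd_refl p) R ∘ c - ZMod.castHom (dvd_refl p) R ∘ c' := by
    ext
    simp
  rw [hsub, dotProduct_sub, sub_eq_zero]
  exact h

theorem det_mooreMatrix_cons {a : Fin m → R} (ha : (mooreMatrix p a).det ≠ 0) (y : R) :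
    (mooreMatrix p (Fin.cons y a : Fin (m + 1) → R)).det
      = (-1) ^ m * (mooreMatrix p a).det *
          ∏ c : Fin m → ZMod p, (y - a ⬝ᵥ (ZMod.castHom (dvd_refl p) R ∘ c)) := by
  have hp : p.Prime := Fact.out
  set g := (mooreMatrix p (Fin.cons X (C ∘ a) : Fin (m + 1) → R[X])).det
  have hcoeff : g.coeff (p ^ m) = (-1) ^ m * (mooreMatrix p a).det :=
    coeff_det_mooreMatrix_cons_X hp.one_lt a
  have hg0 : g ≠ 0 := fun h0 => by
    rw [h0, coeff_zero, eq_comm] at hcoeff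
    exact ha ((mul_eq_zero.1 hcoeff).resolve_left (pow_ne_zero _ (neg_ne_zero.2 one_ne_zero)))
  set W := ∏ c : Fin m → ZMod p, (X - C (a ⬝ᵥ (ZMod.castHom (dvd_refl p) R ∘ c)))
  have hW : W.Monic := monic_prod_of_monic _ _ fun c _ => monic_X_sub_C _
  have hWdeg : W.natDegree = p ^ m := by simp [W]
  have hgW : g = C g.leadingCoeff * W :=
    eq_leadingCoeff_mul_of_monic_of_dvd_of_natDegree_le hW
      (prod_X_sub_C_dvd_of_isRoot (dotProduct_castHom_injective ha) hg0 fun c => by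
        rw [IsRoot.def, eval_det_mooreMatrix_cons_X, det_mooreMatrix_cons_dotProduct])
      (hWdeg ▸ natDegree_det_mooreMatrix_cons_X_le hp.pos a)
  have hlead : g.leadingCoeff = (-1) ^ m * (mooreMatrix p a).det :=
    calc g.leadingCoeff = (C g.leadingCoeff * W).coeff W.natDegree := by
          rw [coeff_C_mul, hW.coeff_natDegree, mul_one]
      _ = (-1) ^ m * (mooreMatrix p a).det := by rw [← hgW, hWdeg, hcoeff]
  rw [← eval_det_mooreMatrix_cons_X]
  change g.eval y = _
  rw [hgW, hlead, eval_mul, eval_C, eval_prod]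
  simp

theorem det_mooreMatrix_ne_zero_iff {a : Fin m → R} :
    (mooreMatrix p a).det ≠ 0 ↔
      ∀ c : Fin m → ZMod p, a ⬝ᵥ (ZMod.castHom (dvd_refl p) R ∘ c) = 0 → c = 0 := by
  refine ⟨fun ha c hc => by_contra fun h =>
    ha (det_mooreMatrix_eq_zero_of_dotProduct_eq_zero h hc), fun hind => ?_⟩
  induction m with
  | zero => simp
  | succ m ih =>
    obtain ⟨y, b, rfl⟩ : ∃ y b, a = Fin.cons y b :=
      ⟨a 0, Fin.tail a, (Fin.cons_self_tail a).symm⟩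
    have hb : (mooreMatrix p b).det ≠ 0 := ih fun c hc => by
      have := hind (Fin.cons 0 c) (by simpa [dotProduct, Fin.sum_univ_succ] using hc)
      ext i
      simpa using congrFun this i.succ
    rw [det_mooreMatrix_cons hb]
    refine mul_ne_zero (mul_ne_zero (pow_ne_zero _ (neg_ne_zero.2 one_ne_zero)) hb)
      (Finset.prod_ne_zero_iff.2 fun c _ h => ?_)
    have := hind (Fin.cons (-1) c) (by
      simp [dotProduct, Fin.sum_univ_succ] at h ⊢
      linear_combination -h)
    simpa using congrFun this 0

theorem det_mooreMatrix_succAbove_ne_zero {a : Fin (m + 1) → R}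
    (ha : (mooreMatrix p a).det ≠ 0) (j : Fin (m + 1)) :
    (mooreMatrix p fun r => a (j.succAbove r)).det ≠ 0 := by
  refine det_mooreMatrix_ne_zero_iff.2 fun c hc => ?_
  have := det_mooreMatrix_ne_zero_iff.1 ha (j.insertNth 0 c)
    (by simpa [dotProduct, Fin.sum_univ_succAbove _ j] using hc)
  ext r
  simpa using congrFun this (j.succAbove r)

theorem det_mooreMatrix_succAbove_dvd (a : Fin (m + 1) → R) (j : Fin (m + 1)) :
    (mooreMatrix p fun r => a (j.succAbove r)).det ∣ (mooreMatrix p a).det := by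
  by_cases ha : (mooreMatrix p a).det = 0
  · rw [ha]
    exact dvd_zero _
  have hhat := det_mooreMatrix_succAbove_ne_zero ha j
  have hcons : a ∘ j.cycleRange.symm = Fin.cons (a j) fun r => a (j.succAbove r) := by
    ext i
    refine Fin.cases ?_ (fun r => ?_) i <;>
      simp [Fin.cycleRange_symm_zero, Fin.cycleRange_symm_succ]
  have hperm : (mooreMatrix p (a ∘ j.cycleRange.symm)).det
      = Equiv.Perm.sign j.cycleRange.symm * (mooreMatrix p a).det :=
    det_permute' j.cycleRange.symm (mooreMatrix p a)
  have hunit : IsUnit ((Equiv.Perm.sign j.cycleRange.symm : ℤ) : R) := by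
    rcases Int.units_eq_one_or (Equiv.Perm.sign j.cycleRange.symm) with h | h <;> simp [h]
  rw [← hunit.dvd_mul_left, ← hperm, hcons, det_mooreMatrix_cons hhat]
  exact (dvd_mul_left _ _).mul_right _

end CharP

theorem moore_det_degree_and_divisibility_general
    {k : Type*} [Field k] (p : ℕ) [Fact p.Prime] [CharP k p]
    (n' l : ℕ)
    (Q : Fin (n' + 1) → Polynomial k) (q : Fin (n' + 1) → k)
    (hdeg : ∀ i, (Q i).natDegree = l)
    (hlead : ∀ i, (Q i).leadingCoeff = q i)
    (hq : (mooreMatrix p q).det ≠ 0)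
    (ε : Fin (n' + 1) → ZMod p) (hε : ε ≠ 0) :
    (mooreMatrix p Q).det.natDegree = (∑ i ∈ Finset.range (n' + 1), p ^ i) * l ∧
    (∑ i, C (ZMod.castHom (dvd_refl p) k (ε i)) * (-1) ^ (i : ℕ) *
        (mooreMatrix p (fun r : Fin n' => Q (Fin.succAbove i r))).det).natDegree
      = (∑ i ∈ Finset.range n', p ^ i) * l ∧
    (∑ i, C (ZMod.castHom (dvd_refl p) k (ε i)) * (-1) ^ (i : ℕ) *
        (mooreMatrix p (fun r : Fin n' => Q (Fin.succAbove i r))).det)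
      ∣ (mooreMatrix p Q).det := by
  set χ := ZMod.castHom (dvd_refl p) k
  have hQ : ∀ i, (Q i).natDegree ≤ l := fun i => (hdeg i).le
  have hcoeff : (fun i => (Q i).coeff l) = q :=
    funext fun i => by rw [← hdeg i, coeff_natDegree, hlead]
  obtain ⟨j, hj⟩ := Function.ne_iff.1 hε
  obtain ⟨A, hA, hεA⟩ := exists_det_eq_one_vecMul_eq_single ε j hj
  have hC : ZMod.castHom (dvd_refl p) k[X] = C.comp χ := RingHom.ext_zmod _ _
  set Q' := Q ᵥ* (A.map χ).map C
  have hQ' : Q ᵥ* A.map (ZMod.castHom (dvd_refl p) k[X]) = Q' := by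
    rw [hC]
    rfl
  have hPε : ∑ i, C (χ (ε i)) * (-1) ^ (i : ℕ) *
        (mooreMatrix p (fun r : Fin n' => Q (Fin.succAbove i r))).det
      = C ((-1) ^ (j : ℕ) * χ (ε j)) * (mooreMatrix p fun r => Q' (j.succAbove r)).det := by
    have h := sum_castHom_mul_det_mooreMatrix_succAbove (R := k[X]) hA hεA Q
    rw [hQ'] at h
    simp only [hC, RingHom.comp_apply] at h
    rw [C_mul, C_pow, C_neg, C_1, ← h]
    exact Finset.sum_congr rfl fun i _ => by ring
  have hP : (mooreMatrix p Q).det = (mooreMatrix p Q').det := by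
    rw [← hQ', det_mooreMatrix_vecMul_map_castHom, hA, map_one, mul_one]
  have hq' : (mooreMatrix p fun r => (Q' (j.succAbove r)).coeff l).det ≠ 0 := by
    simp only [Q', coeff_vecMul_map_C, hcoeff]
    refine det_mooreMatrix_succAbove_ne_zero ?_ j
    rwa [det_mooreMatrix_vecMul_map_castHom, hA, map_one, mul_one]
  have hu : (-1 : k) ^ (j : ℕ) * χ (ε j) ≠ 0 :=
    mul_ne_zero (pow_ne_zero _ (neg_ne_zero.2 one_ne_zero)) ((map_ne_zero χ).2 hj)
  refine ⟨natDegree_det_mooreMatrix hQ (by rwa [hcoeff]), ?_, ?_⟩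
  · rw [hPε, natDegree_C_mul hu]
    exact natDegree_det_mooreMatrix (fun r => natDegree_vecMul_map_C_le hQ _ _) hq'
  · rw [hPε, hP, (isUnit_C.2 hu.isUnit).mul_left_dvd]
    exact det_mooreMatrix_succAbove_dvd Q' j

/-- Let `Q₁,…,Q_n` (here `n = n'+1`) be polynomials of common degree `λ ≥ 1` whose
leading coefficients `q₁,…,q_n` satisfy `Δ_n(q) ≠ 0`.  Put `P = Δ_n(Q)` and, for
`ε ∈ 𝔽_p^n ∖ {0}`, `P_ε = Σᵢ εᵢ(-1)^{i-1} Δ_{n-1}(Q-hatᵢ)`.  Then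
`deg P = (1+p+⋯+p^{n-1})λ`, `deg P_ε = (1+p+⋯+p^{n-2})λ`, and `P_ε ∣ P`. -/
theorem moore_det_degree_and_divisibility
    {k : Type*} [Field k] [IsAlgClosed k] (p : ℕ) [Fact p.Prime] [CharP k p]
    (e : ℕ) (n' l : ℕ) (hl : 1 ≤ l)
    (Q : Fin (n' + 1) → Polynomial k) (q : Fin (n' + 1) → k)
    (hdeg : ∀ i, (Q i).natDegree = l)
    (hlead : ∀ i, (Q i).leadingCoeff = q i)
    (hq : (mooreMatrix p q).det ≠ 0)
    (ε : Fin (n' + 1) → ZMod p) (hε : ε ≠ 0) :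
    (mooreMatrix p Q).det.natDegree = (∑ i ∈ Finset.range (n' + 1), p ^ i) * l ∧
    (∑ i, C (ZMod.castHom (dvd_refl p) k (ε i)) * (-1) ^ (i : ℕ) *
        (mooreMatrix p (fun r : Fin n' => Q (Fin.succAbove i r))).det).natDegree
      = (∑ i ∈ Finset.range n', p ^ i) * l ∧
    (∑ i, C (ZMod.castHom (dvd_refl p) k (ε i)) * (-1) ^ (i : ℕ) *
        (mooreMatrix p (fun r : Fin n' => Q (Fin.succAbove i r))).det)
      ∣ (mooreMatrix p Q).det :=
  moore_det_degree_and_divisibility_general p n' l Q q hdeg hlead hq ε hε
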